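/- The number of 2-colored Rogers-Ramanujan partitions of n with no red 1 equals D_{2,1}(n), the number of overpartitions of n with no non-overlined part equal to 1 in which d_j - d_{j+1} ≥ 1 if d_j is overlined and d_j - d_{j+1} ≥ 2 otherwise. -/
import Mathlib


/-- A valid single-color part set of a 2-colored Rogers-Ramanujan partition:
all parts positive and any two distinct parts differ by at least 2. -/
def IsRRColor (A : Finset ℕ) : Prop :=
  (∀ a ∈ A, 1 ≤ a) ∧ ∀ a ∈ A, ∀ b ∈ A, a ≠ b → 2 ≤ max a b - min a b

/-- A 2-colored Rogers-Ramanujan partition: a pair of part sets (black, red),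
each a valid color class, with no common part. -/
def TwoColoredRR (p : Finset ℕ × Finset ℕ) : Prop :=
  IsRRColor p.1 ∧ IsRRColor p.2 ∧ Disjoint p.1 p.2

/-- An overpartition of the kind counted by `D_{2,1}(n)`: all parts positive and
distinct (recorded by the finset `P`), `O ⊆ P` is the set of overlined parts,
whenever a part `d` is not overlined, `d - 1` is not a part (i.e. `d_j - d_{j+1} ≥ 1`
if `d_j` is overlined and `d_j - d_{j+1} ≥ 2` otherwise), and `1` does not occur as a
non-overlined part. -/
def OverpartitionD21 (P O : Finset ℕ) : Prop :=
  O ⊆ P ∧ (∀ a ∈ P, 1 ≤ a) ∧ (∀ d ∈ P, d ∉ O → d - 1 ∉ P) ∧ (1 ∈ P → 1 ∈ O)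

/-- The minimum of the maximal run of consecutive elements of `P` ending at `d`. -/
def rmin (P : Finset ℕ) : ℕ → ℕ
  | 0 => 0
  | d+1 => if d ∈ P then rmin P d else d+1

lemma rmin_succ_def (P : Finset ℕ) (d : ℕ) :
    rmin P (d+1) = if d ∈ P then rmin P d else d+1 := rfl

lemma rmin_le (P : Finset ℕ) (d : ℕ) : rmin P d ≤ d := by
  induction d with
  | zero => simp [rmin]
  | succ e ih => rw [rmin_succ_def]; split <;> omega

lemma rmin_succ (P : Finset ℕ) (d : ℕ) (h : d ∈ P) : rmin P (d+1) = rmin P d := by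
  rw [rmin_succ_def, if_pos h]

lemma rmin_eq_self (P : Finset ℕ) (d : ℕ) (h : d - 1 ∉ P) : rmin P d = d := by
  cases d with
  | zero => simp [rmin]
  | succ e => rw [rmin_succ_def, if_neg (by simpa using h)]

lemma rmin_mem (P : Finset ℕ) (h0 : 0 ∉ P) : ∀ d, d ∈ P → rmin P d ∈ P := by
  intro d
  induction d with
  | zero => intro h; exact absurd h h0
  | succ e ih =>
    intro h
    rw [rmin_succ_def]
    split
    · exact ih ‹e ∈ P›
    · exact h

lemma rmin_pred_not_mem (P : Finset ℕ) (h0 : 0 ∉ P) (d : ℕ) : rmin P d - 1 ∉ P := by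
  induction d with
  | zero => simpa [rmin] using h0
  | succ e ih =>
    rw [rmin_succ_def]
    split
    · exact ih
    · simpa using ‹e ∉ P›

/-- The color predicate recovered from an overpartition: parity along the run,
anchored at the run minimum's overline status. -/
def colc (P O : Finset ℕ) (d : ℕ) : Prop :=
  Even (d - rmin P d) ↔ rmin P d ∈ O

instance (P O : Finset ℕ) : DecidablePred (colc P O) := fun d => by
  unfold colc; infer_instance

/-- The overline predicate built from a coloring. -/
def ovl (P A : Finset ℕ) (d : ℕ) : Prop := d - 1 ∈ P ∨ d ∈ A

instance (P A : Finset ℕ) : DecidablePred (ovl P A) := fun d => by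
  unfold ovl; infer_instance

/-- No two elements of an `IsRRColor` set are consecutive. -/
lemma not_consec (A : Finset ℕ) (hA : IsRRColor A) (d : ℕ) (h1 : d ∈ A) (h2 : d+1 ∈ A) :
    False := by
  have := hA.2 d h1 (d+1) h2 (by omega)
  omega

lemma alt (A B : Finset ℕ) (hA : IsRRColor A) (hB : IsRRColor B)
    (d : ℕ) (h1 : d ∈ A ∪ B) (h2 : d+1 ∈ A ∪ B) : (d ∈ A ↔ d+1 ∉ A) := by
  simp only [Finset.mem_union] at h1 h2
  constructor
  · intro hd hd1
    exact not_consec A hA d hd hd1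
  · intro hd1
    rcases h1 with h | h
    · exact h
    · rcases h2 with h' | h'
      · exact absurd h' hd1
      · exact absurd h' (fun h' => not_consec B hB d h h')

lemma zero_not_mem_union (A B : Finset ℕ) (hA : IsRRColor A) (hB : IsRRColor B) :
    0 ∉ A ∪ B := by
  simp only [Finset.mem_union]
  rintro (h | h)
  · exact absurd (hA.1 0 h) (by omega)
  · exact absurd (hB.1 0 h) (by omega)

/-- `colc` alternates along runs. -/
lemma colc_succ (P O : Finset ℕ) (d : ℕ) (hd : d ∈ P) :
    (colc P O (d+1) ↔ ¬ colc P O d) := by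
  have hr : rmin P (d+1) = rmin P d := rmin_succ _ d hd
  have hle : rmin P d ≤ d := rmin_le _ d
  unfold colc
  rw [hr]
  have h : (d + 1 - rmin P d) = (d - rmin P d) + 1 := by omega
  rw [h, Nat.even_add_one]
  tauto

/-- Key characterization: membership in `A` is determined by parity along the run. -/
lemma mem_A_iff (A B : Finset ℕ) (hA : IsRRColor A) (hB : IsRRColor B) :
    ∀ d, d ∈ A ∪ B →
      (d ∈ A ↔ colc (A ∪ B) A d) := by
  intro d
  induction d with
  | zero => intro h; exact absurd h (zero_not_mem_union A B hA hB)
  | succ e ih =>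
    intro h
    by_cases he : e ∈ A ∪ B
    · have halt := alt A B hA hB e he h
      have hcs := colc_succ (A ∪ B) A e he
      by_cases heA : e ∈ A
      · have h1 : e + 1 ∉ A := halt.mp heA
        have h2 : colc (A ∪ B) A e := (ih he).mp heA
        rw [hcs]
        tauto
      · have h1 : e + 1 ∈ A := by tauto
        have h2 : ¬ colc (A ∪ B) A e := fun hc => heA ((ih he).mpr hc)
        rw [hcs]
        tauto
    · have hr : rmin (A ∪ B) (e+1) = e+1 := rmin_eq_self _ (e+1) (by simpa using he)
      unfold colc
      rw [hr]
      simp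

/-- Forward map: from a pair of colors to an overpartition. -/
def fwd (p : Finset ℕ × Finset ℕ) : Finset ℕ × Finset ℕ :=
  (p.1 ∪ p.2, (p.1 ∪ p.2).filter (ovl (p.1 ∪ p.2) p.1))

/-- Backward map: from an overpartition to a pair of colors. -/
def bwd (po : Finset ℕ × Finset ℕ) : Finset ℕ × Finset ℕ :=
  (po.1.filter (colc po.1 po.2), po.1.filter (fun d => ¬ colc po.1 po.2 d))

lemma fwd_prop (p : Finset ℕ × Finset ℕ) (hp : TwoColoredRR p) (h1 : 1 ∉ p.2) :
    OverpartitionD21 (fwd p).1 (fwd p).2 := by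
  obtain ⟨A, B⟩ := p
  obtain ⟨hA, hB, hd⟩ := hp
  simp only at hA hB hd h1
  refine ⟨Finset.filter_subset _ _, ?_, ?_, ?_⟩
  · intro a ha
    simp only [fwd, Finset.mem_union] at ha
    rcases ha with h | h
    · exact hA.1 a h
    · exact hB.1 a h
  · intro d hd' hdo
    simp only [fwd, Finset.mem_filter] at hd' hdo ⊢
    intro hc
    exact hdo ⟨hd', Or.inl hc⟩
  · intro hone
    simp only [fwd, Finset.mem_filter] at hone ⊢
    refine ⟨hone, Or.inr ?_⟩
    simp only [Finset.mem_union] at hone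
    tauto

lemma bwd_prop (po : Finset ℕ × Finset ℕ) (hpo : OverpartitionD21 po.1 po.2) :
    TwoColoredRR (bwd po) ∧ 1 ∉ (bwd po).2 := by
  obtain ⟨P, O⟩ := po
  obtain ⟨hsub, hpos, hgap, hone⟩ := hpo
  simp only at hsub hpos hgap hone
  have h0 : 0 ∉ P := fun h => absurd (hpos 0 h) (by omega)
  have gapA : ∀ (s : Finset ℕ), (∀ x ∈ s, x ∈ P) →
      (∀ a b, a ∈ s → b ∈ s → a + 1 = b → False) →
      (∀ a ∈ s, ∀ b ∈ s, a ≠ b → 2 ≤ max a b - min a b) := by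
    intro s hsP hcons a ha b hb hab
    rcases Nat.lt_or_ge a b with h | h
    · rcases Nat.lt_or_ge (a+1) b with h2 | h2
      · simp only [Nat.max_eq_right (le_of_lt h), Nat.min_eq_left (le_of_lt h)]; omega
      · exact (hcons a b ha hb (by omega)).elim
    · have hba : b < a := by omega
      rcases Nat.lt_or_ge (b+1) a with h2 | h2
      · simp only [Nat.max_eq_left h, Nat.min_eq_right h]; omega
      · exact (hcons b a hb ha (by omega)).elim
  constructor
  · refine ⟨⟨?_, ?_⟩, ⟨?_, ?_⟩, ?_⟩
    · intro a ha
      exact hpos a (Finset.mem_filter.mp ha).1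
    · apply gapA
      · intro x hx; exact (Finset.mem_filter.mp hx).1
      · intro a b ha hb hab
        obtain ⟨ha1, ha2⟩ := Finset.mem_filter.mp ha
        obtain ⟨hb1, hb2⟩ := Finset.mem_filter.mp hb
        subst hab
        exact ((colc_succ P O a ha1).mp hb2) ha2
    · intro a ha
      exact hpos a (Finset.mem_filter.mp ha).1
    · apply gapA
      · intro x hx; exact (Finset.mem_filter.mp hx).1
      · intro a b ha hb hab
        obtain ⟨ha1, ha2⟩ := Finset.mem_filter.mp ha
        obtain ⟨hb1, hb2⟩ := Finset.mem_filter.mp hb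
        subst hab
        exact hb2 ((colc_succ P O a ha1).mpr ha2)
    · exact Finset.disjoint_filter_filter_not P P (colc P O)
  · show 1 ∉ P.filter (fun d => ¬ colc P O d)
    rw [Finset.mem_filter]
    rintro ⟨h1P, h1c⟩
    apply h1c
    have hr : rmin P 1 = 1 := rmin_eq_self P 1 (by simpa using h0)
    unfold colc
    rw [hr]
    simp [hone h1P]

lemma bwd_fwd (p : Finset ℕ × Finset ℕ) (hp : TwoColoredRR p) : bwd (fwd p) = p := by
  obtain ⟨A, B⟩ := p
  obtain ⟨hA, hB, hd⟩ := hp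
  simp only at hA hB hd
  have h0 : 0 ∉ A ∪ B := zero_not_mem_union A B hA hB
  have key : ∀ d ∈ A ∪ B,
      (colc (A ∪ B) ((A ∪ B).filter (ovl (A ∪ B) A)) d ↔ d ∈ A) := by
    intro d hdP
    have hm : rmin (A ∪ B) d ∈ A ∪ B := rmin_mem _ h0 d hdP
    have hmp : rmin (A ∪ B) d - 1 ∉ A ∪ B := rmin_pred_not_mem _ h0 d
    have hmO : rmin (A ∪ B) d ∈ (A ∪ B).filter (ovl (A ∪ B) A) ↔ rmin (A ∪ B) d ∈ A := by
      rw [Finset.mem_filter]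
      unfold ovl
      tauto
    unfold colc
    rw [hmO]
    unfold colc at *
    exact Iff.symm (mem_A_iff A B hA hB d hdP)
  show ((A ∪ B).filter (colc (A ∪ B) ((A ∪ B).filter (ovl (A ∪ B) A))),
      (A ∪ B).filter (fun d => ¬ colc (A ∪ B) ((A ∪ B).filter (ovl (A ∪ B) A)) d)) = (A, B)
  have h1 : (A ∪ B).filter (colc (A ∪ B) ((A ∪ B).filter (ovl (A ∪ B) A))) = A := by
    ext d
    rw [Finset.mem_filter]
    constructor
    · rintro ⟨hdP, hc⟩
      exact (key d hdP).mp hc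
    · intro hdA
      have hdP : d ∈ A ∪ B := Finset.mem_union_left B hdA
      exact ⟨hdP, (key d hdP).mpr hdA⟩
  have h2 : (A ∪ B).filter (fun d => ¬ colc (A ∪ B) ((A ∪ B).filter (ovl (A ∪ B) A)) d) = B := by
    ext d
    rw [Finset.mem_filter]
    constructor
    · rintro ⟨hdP, hc⟩
      have hdA : d ∉ A := fun h => hc ((key d hdP).mpr h)
      rcases Finset.mem_union.mp hdP with h | h
      · exact absurd h hdA
      · exact h
    · intro hdB
      have hdP : d ∈ A ∪ B := Finset.mem_union_right A hdB
      refine ⟨hdP, fun hc => ?_⟩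
      exact (Finset.disjoint_left.mp hd ((key d hdP).mp hc)) hdB
  rw [h1, h2]

lemma fwd_bwd (po : Finset ℕ × Finset ℕ) (hpo : OverpartitionD21 po.1 po.2) :
    fwd (bwd po) = po := by
  obtain ⟨P, O⟩ := po
  obtain ⟨hsub, hpos, hgap, hone⟩ := hpo
  simp only at hsub hpos hgap hone
  have h0 : 0 ∉ P := fun h => absurd (hpos 0 h) (by omega)
  have hPU : P.filter (colc P O) ∪ P.filter (fun d => ¬ colc P O d) = P :=
    Finset.filter_union_filter_not_eq (colc P O) P
  show (P.filter (colc P O) ∪ P.filter (fun d => ¬ colc P O d),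
      (P.filter (colc P O) ∪ P.filter (fun d => ¬ colc P O d)).filter
        (ovl (P.filter (colc P O) ∪ P.filter (fun d => ¬ colc P O d)) (P.filter (colc P O)))) = (P, O)
  have hQ : ∀ x, x ∈ P.filter (colc P O) ∪ P.filter (fun d => ¬ colc P O d) ↔ x ∈ P := by
    intro x; rw [hPU]
  refine Prod.ext hPU ?_
  show (P.filter (colc P O) ∪ P.filter (fun d => ¬ colc P O d)).filter
        (ovl (P.filter (colc P O) ∪ P.filter (fun d => ¬ colc P O d)) (P.filter (colc P O))) = O
  ext d
  rw [Finset.mem_filter, hQ d]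
  unfold ovl
  rw [hQ (d-1), Finset.mem_filter]
  constructor
  · rintro ⟨hdP, h | h⟩
    · by_contra hdO
      exact (hgap d hdP hdO) h
    · obtain ⟨-, hc⟩ := h
      by_cases hd1 : d - 1 ∈ P
      · by_contra hdO
        exact (hgap d hdP hdO) hd1
      · have hr : rmin P d = d := rmin_eq_self P d hd1
        unfold colc at hc
        rw [hr, Nat.sub_self] at hc
        exact hc.mp Even.zero
  · intro hdO
    have hdP : d ∈ P := hsub hdO
    refine ⟨hdP, ?_⟩
    by_cases hd1 : d - 1 ∈ P
    · exact Or.inl hd1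
    · refine Or.inr ⟨hdP, ?_⟩
      have hr : rmin P d = d := rmin_eq_self P d hd1
      unfold colc
      rw [hr, Nat.sub_self]
      simp [hdO]

/-- The number of 2-colored Rogers-Ramanujan partitions of `n` with no red `1`
equals `D_{2,1}(n)`. -/
theorem R3_eq_D21 (n : ℕ) :
    Nat.card {p : Finset ℕ × Finset ℕ // TwoColoredRR p ∧ 1 ∉ p.2 ∧
        p.1.sum id + p.2.sum id = n} =
      Nat.card {po : Finset ℕ × Finset ℕ // OverpartitionD21 po.1 po.2 ∧
        po.1.sum id = n} := by
  apply Nat.card_congr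
  refine ⟨fun x => ⟨fwd x.1, ?_, ?_⟩, fun y => ⟨bwd y.1, ?_, ?_, ?_⟩, ?_, ?_⟩
  · exact fwd_prop x.1 x.2.1 x.2.2.1
  · have hd : Disjoint x.1.1 x.1.2 := x.2.1.2.2
    have hsum := x.2.2.2
    show (x.1.1 ∪ x.1.2).sum id = n
    rw [Finset.sum_union hd]
    exact hsum
  · exact (bwd_prop y.1 y.2.1).1
  · exact (bwd_prop y.1 y.2.1).2
  · have hsum := y.2.2
    show (y.1.1.filter (colc y.1.1 y.1.2)).sum id
        + (y.1.1.filter (fun d => ¬ colc y.1.1 y.1.2 d)).sum id = n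
    rw [Finset.sum_filter_add_sum_filter_not]
    exact hsum
  · intro x
    exact Subtype.ext (bwd_fwd x.1 x.2.1)
  · intro y
    exact Subtype.ext (fwd_bwd y.1 y.2.1)
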